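/- If τ = {(x_1,m_1),...,(x_ℓ,m_ℓ)} is a flippable tuple on D_k witnessed by a flipping cycle C = (y_1,...,y_{2ℓ}) in G_k, then for every Dyck word u, the tuple uτ := {(u x_i, |u| + m_i)} is a flippable tuple on D_{k+|u|/2}, witnessed by the cycle (ū y_1, ..., ū y_{2ℓ}). -/

import Mathlib

/-- `x ∈ B_k`: bitstring of length `2k` with weight `k` or `k+1`. -/
def inB (k : ℕ) (x : List Bool) : Prop :=
  x.length = 2*k ∧ (x.count true = k ∨ x.count true = k+1)

/-- Dyck word: equally many 1s and 0s, every prefix has at least as many 1s as 0s. -/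
def isDyck (x : List Bool) : Prop :=
  x.count true = x.count false ∧ ∀ n, (x.take n).count false ≤ (x.take n).count true

/-- Complement of the reverse. -/
def mirror (x : List Bool) : List Bool := x.reverse.map (fun b => !b)

/-- Bitwise complement. -/
def compl (x : List Bool) : List Bool := x.map (fun b => !b)

/-- Specification of the recursively defined bit-flip sequence `π`. -/
def IsPiFun (π : List Bool → List ℕ) : Prop :=
  π [] = [] ∧ ∀ u v : List Bool, isDyck u → isDyck v →
    π (true :: u ++ false :: v) =
      (u.length + 2) :: ((π (mirror u)).map (fun a => u.length + 2 - a))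
        ++ 1 :: ((π v).map (fun a => u.length + 2 + a))

/-- Flip the bit at (1-indexed) position `a`. -/
def flipBit (y : List Bool) (a : ℕ) : List Bool := y.set (a-1) (!(y.getD (a-1) false))

/-- The path `P(x)`, as the list of vertices obtained by flipping bits in order `π x`. -/
def pathOf (π : List Bool → List ℕ) (x : List Bool) : List (List Bool) :=
  List.scanl flipBit x (π x)

/-- Adjacency in `G_k`: both vertices in `B_k`, differing in exactly one position. -/
def GkAdj (k : ℕ) (x y : List Bool) : Prop :=
  inB k x ∧ inB k y ∧ (List.range (2*k)).countP (fun i => x.getD i false != y.getD i false) = 1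

/-- Adjacency in `G_k^+`: a `G_k` edge or a complement edge. -/
def GkPlusAdj (k : ℕ) (x y : List Bool) : Prop :=
  GkAdj k x y ∨ (inB k x ∧ inB k y ∧ (y = compl x ∨ x = compl y))
/-- Edges of a path, as a list of unordered pairs. -/
def edgesOf (l : List (List Bool)) : List (Sym2 (List Bool)) :=
  l.zipWith (fun a b => s(a,b)) l.tail

/-- Edges of a closed cycle listed by its vertices. -/
def cycEdges (l : List (List Bool)) : List (Sym2 (List Bool)) :=
  l.zipWith (fun a b => s(a,b)) (l.rotate 1)

/-- `e(x,m)`: the edge of the path `P(x)` along which the `m`-th bit is flipped. -/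
def edgeOf (π : List Bool → List ℕ) (x : List Bool) (m : ℕ) : Sym2 (List Bool) :=
  s((pathOf π x).getD ((π x).idxOf m) [], (pathOf π x).getD ((π x).idxOf m + 1) [])

/-- `ys` is a flipping `2ℓ`-cycle in `G_k` witnessing the marked tuple `τ`:
a cycle through `2·|τ|` vertices whose intersection with the path `P(x)`, for each
Dyck word `x` of length `2k`, consists exactly of the edges `e(x,m)` with `(x,m) ∈ τ`. -/
def IsFlippingCycleFor (π : List Bool → List ℕ) (k : ℕ)
    (τ : Finset (List Bool × ℕ)) (ys : List (List Bool)) : Prop :=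
  ys.Nodup ∧ ys.length = 2 * τ.card ∧ List.Chain' (GkAdj k) ys ∧
  (∀ h : ys ≠ [], GkAdj k (ys.getLast h) (ys.head h)) ∧
  (∀ p ∈ τ, edgeOf π p.1 p.2 ∈ cycEdges ys) ∧
  (∀ x : List Bool, isDyck x → x.length = 2*k →
    ∀ e ∈ cycEdges ys, e ∈ edgesOf (pathOf π x) → ∃ m, (x, m) ∈ τ ∧ e = edgeOf π x m)

/-- `τ` is a flippable tuple on `D_k`: at least three marked Dyck words of length `2k`
with distinct underlying words, witnessed by some flipping cycle. -/
def IsFlippableTuple (π : List Bool → List ℕ) (k : ℕ) (τ : Finset (List Bool × ℕ)) : Prop :=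
  3 ≤ τ.card ∧ (∀ p ∈ τ, isDyck p.1 ∧ p.1.length = 2*k ∧ 1 ≤ p.2 ∧ p.2 ≤ 2*k) ∧
  (∀ p ∈ τ, ∀ q ∈ τ, p.1 = q.1 → p = q) ∧
  ∃ ys, IsFlippingCycleFor π k τ ys

/-!
Write `ū y` for the word `y` prefixed with the complement of a Dyck word `u`. The recursion for
`π` gives `π(u v) = π(u) ++ (|u| + π(v))` with `π(u)` a permutation of `1, …, |u|`, so the path
`P(u x)` first complements the block `u` and then runs through the copy `ū P(x)` of `P(x)`; in
particular `e(u x, |u| + m) = ū e(x, m)`, and prefixing `ū` maps `G_k` edges to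
`G_{k+|u|/2}` edges. What remains is that `ū C` meets no other path: by induction along the
first-return decomposition `u = 1 c 0 d`, a vertex of `P(x)` that starts with `ū` forces
`x = u t` and lies on `ū P(t)`, so every edge of `ū C` on `P(x)` comes from an edge of `C` on
`P(t)`.
-/

namespace MiddleLevels

open scoped List

lemma idxOf_map_of_injective {α β : Type*} [BEq α] [LawfulBEq α] [BEq β] [LawfulBEq β]
    {f : α → β} (hf : Function.Injective f) (a : α) (l : List α) :
    (l.map f).idxOf (f a) = l.idxOf a := by
  induction l with
  | nil => rfl
  | cons b l ih =>
    rw [List.map_cons, List.idxOf_cons, List.idxOf_cons, ih,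
      Bool.eq_iff_iff.2 (by simp [hf.eq_iff] : (f b == f a) = true ↔ (b == a) = true)]

lemma length_compl (x : List Bool) : (compl x).length = x.length := List.length_map _

lemma compl_append (x y : List Bool) : compl (x ++ y) = compl x ++ compl y := List.map_append

-- Unfolding needs `_root_.compl`: the bare name also denotes Mathlib's `HasCompl.compl`.
lemma compl_compl (x : List Bool) : compl (compl x) = x := by
  simp [_root_.compl, Function.comp_def]

lemma compl_cons_append_false_cons (c d : List Bool) :
    compl (true :: c ++ false :: d) = false :: compl c ++ true :: compl d := by
  simp [_root_.compl]

lemma compl_prefix_compl_iff {x y : List Bool} : compl x <+: compl y ↔ x <+: y :=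
  List.prefix_map_iff_of_injective fun a b h => by simpa using h

lemma count_compl (b : Bool) (x : List Bool) : (compl x).count b = x.count (!b) := by
  rw [_root_.compl, List.count_eq_countP, List.count_eq_countP, List.countP_map]
  exact List.countP_congr (by intro c _; cases b <;> cases c <;> simp)

lemma mirror_eq_compl_reverse (x : List Bool) : mirror x = compl x.reverse := rfl

lemma count_mirror (b : Bool) (x : List Bool) : (mirror x).count b = x.count (!b) := by
  rw [mirror_eq_compl_reverse, count_compl, List.count_reverse]

lemma length_mirror (x : List Bool) : (mirror x).length = x.length := by simp [mirror]

lemma flipBit_flipBit_comm (y : List Bool) (a b : ℕ) :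
    flipBit (flipBit y a) b = flipBit (flipBit y b) a := by
  unfold flipBit
  by_cases h : a - 1 = b - 1
  · rw [h]
  · simp only [List.getD_eq_getElem?_getD, List.getElem?_set_ne h,
      List.getElem?_set_ne (Ne.symm h)]
    exact List.set_comm _ _ h

lemma flipBit_append_length_add (w v : List Bool) {a : ℕ} (ha : 1 ≤ a) :
    flipBit (w ++ v) (w.length + a) = w ++ flipBit v a := by
  unfold flipBit
  rw [show w.length + a - 1 = w.length + (a - 1) by omega,
    List.getD_append_right _ _ _ _ (by omega), Nat.add_sub_cancel_left, List.set_append,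
    if_neg (by omega), Nat.add_sub_cancel_left]

lemma foldl_flipBit_append_map_length_add (w : List Bool) {L : List ℕ} (hL : ∀ a ∈ L, 1 ≤ a)
    (s : List Bool) :
    (L.map (w.length + ·)).foldl flipBit (w ++ s) = w ++ L.foldl flipBit s := by
  induction L generalizing s with
  | nil => rfl
  | cons a L ih =>
    simp only [List.map_cons, List.foldl_cons, flipBit_append_length_add w s (hL a (by simp))]
    exact ih (fun b hb => hL b (by simp [hb])) _

lemma foldl_flipBit_range' (w v : List Bool) :
    (List.range' 1 w.length).foldl flipBit (w ++ v) = compl w ++ v := by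
  induction w with
  | nil => rfl
  | cons b w ih =>
    have hshift := foldl_flipBit_append_map_length_add [!b] (L := List.range' 1 w.length)
      (fun a ha => (List.mem_range'_1.1 ha).1) (w ++ v)
    rw [List.map_add_range'] at hshift
    rw [List.length_cons, List.range'_succ, List.foldl_cons]
    simpa [flipBit, ih, _root_.compl] using hshift

lemma take_foldl_flipBit {n : ℕ} {L : List ℕ} (hL : ∀ a ∈ L, n < a) (y : List Bool) :
    (L.foldl flipBit y).take n = y.take n := by
  induction L generalizing y with
  | nil => rfl
  | cons a L ih =>
    rw [List.foldl_cons, ih (fun b hb => hL b (by simp [hb])), flipBit,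
      List.take_set_of_le (by have := hL a (by simp); omega)]

lemma count_true_of_isDyck {x : List Bool} (h : isDyck x) : x.count true = x.length / 2 := by
  have := List.count_true_add_count_false x
  have := h.1
  omega

lemma two_mul_length_div_two_of_isDyck {x : List Bool} (h : isDyck x) :
    2 * (x.length / 2) = x.length := by
  have := List.count_true_add_count_false x
  have := h.1
  omega

lemma isDyck_append {u v : List Bool} (hu : isDyck u) (hv : isDyck v) : isDyck (u ++ v) := by
  refine ⟨by simp [List.count_append, hu.1, hv.1], fun n => ?_⟩
  rw [List.take_append]
  simp only [List.count_append]
  have := hu.2 n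
  have := hv.2 (n - u.length)
  omega

lemma isDyck_of_append {u v : List Bool} (hu : isDyck u) (h : isDyck (u ++ v)) : isDyck v := by
  have hc := h.1
  simp only [List.count_append, hu.1] at hc
  refine ⟨by omega, fun n => ?_⟩
  have := h.2 (u.length + n)
  rw [List.take_append, List.take_of_length_le (Nat.le_add_right _ _)] at this
  simp only [List.count_append, Nat.add_sub_cancel_left] at this
  have := hu.1
  omega

lemma isDyck_mirror {x : List Bool} (h : isDyck x) : isDyck (mirror x) := by
  refine ⟨by rw [count_mirror, count_mirror]; exact h.1.symm, fun n => ?_⟩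
  rw [mirror_eq_compl_reverse, _root_.compl, ← List.map_take, List.take_reverse, ← _root_.compl,
    count_compl, count_compl]
  simp only [List.count_reverse, Bool.not_true, Bool.not_false]
  have := h.2 (x.length - n)
  have := h.1
  have e1 := congrArg (List.count true) (List.take_append_drop (x.length - n) x)
  have e2 := congrArg (List.count false) (List.take_append_drop (x.length - n) x)
  rw [List.count_append] at e1 e2
  omega

def boolEquivDyckStep : Bool ≃ DyckStep where
  toFun b := if b then .U else .D
  invFun s := s = .U
  left_inv b := by cases b <;> rfl
  right_inv s := by cases s <;> rfl

@[simp] lemma boolEquivDyckStep_symm_U : boolEquivDyckStep.symm .U = true := rfl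

@[simp] lemma boolEquivDyckStep_symm_D : boolEquivDyckStep.symm .D = false := rfl

def dyckWordOfIsDyck {x : List Bool} (hx : isDyck x) : DyckWord where
  toList := x.map boolEquivDyckStep
  count_U_eq_count_D :=
    (List.count_map_of_injective _ _ boolEquivDyckStep.injective true).trans
      (hx.1.trans (List.count_map_of_injective _ _ boolEquivDyckStep.injective false).symm)
  count_D_le_count_U i := by
    rw [← List.map_take]
    exact (List.count_map_of_injective _ _ boolEquivDyckStep.injective false).trans_le
      ((hx.2 i).trans_eq (List.count_map_of_injective _ _ boolEquivDyckStep.injective true).symm)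

lemma isDyck_map_symm (p : DyckWord) : isDyck (p.toList.map boolEquivDyckStep.symm) := by
  have hcount (l : List DyckStep) (s : DyckStep) :
      (l.map boolEquivDyckStep.symm).count (boolEquivDyckStep.symm s) = l.count s :=
    List.count_map_of_injective _ _ boolEquivDyckStep.symm.injective s
  refine ⟨(hcount _ .U).trans (p.count_U_eq_count_D.trans (hcount _ .D).symm), fun i => ?_⟩
  rw [← List.map_take]
  exact (hcount _ .D).trans_le ((p.count_D_le_count_U i).trans_eq (hcount _ .U).symm)

lemma isDyck_nest {a : List Bool} (ha : isDyck a) : isDyck (true :: a ++ [false]) := by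
  simpa [dyckWordOfIsDyck, DyckWord.nest, Function.comp_def] using
    isDyck_map_symm (dyckWordOfIsDyck ha).nest

lemma exists_eq_cons_append_of_isDyck {x : List Bool} (hx : isDyck x) (hne : x ≠ []) :
    ∃ a b, isDyck a ∧ isDyck b ∧ x = true :: a ++ false :: b := by
  set p := dyckWordOfIsDyck hx
  have hp : p ≠ 0 := DyckWord.toList_ne_nil.1 (by simpa [p, dyckWordOfIsDyck] using hne)
  refine ⟨_, _, isDyck_map_symm p.insidePart, isDyck_map_symm p.outsidePart, ?_⟩
  have h : x = (p.insidePart.nest + p.outsidePart).toList.map boolEquivDyckStep.symm := by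
    rw [DyckWord.nest_insidePart_add_outsidePart hp]
    simp [p, dyckWordOfIsDyck, Function.comp_def]
  rw [h]
  show List.map _ ([.U] ++ p.insidePart.toList ++ [.D] ++ p.outsidePart.toList) = _
  simp

theorem isDyck_induction {p : List Bool → Prop} (nil : p [])
    (cons : ∀ a b, isDyck a → isDyck b → (∀ y, isDyck y → y.length ≤ a.length → p y) → p b →
      p (true :: a ++ false :: b)) :
    ∀ x, isDyck x → p x := by
  intro x
  induction hn : x.length using Nat.strong_induction_on generalizing x with
  | _ n ih =>
    intro hx
    rcases eq_or_ne x [] with rfl | hne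
    · exact nil
    obtain ⟨a, b, ha, hb, rfl⟩ := exists_eq_cons_append_of_isDyck hx hne
    simp only [List.length_cons, List.length_append] at hn
    exact cons a b ha hb (fun y hy hle => ih _ (by omega) y rfl hy) (ih _ (by omega) b rfl hb)

lemma not_isDyck_append_false_cons {c : List Bool} (hc : isDyck c) (r : List Bool) :
    ¬ isDyck (c ++ false :: r) := by
  intro h
  have := h.2 (c.length + 1)
  rw [List.take_append, List.take_of_length_le (by omega), Nat.add_sub_cancel_left] at this
  simp [List.count_append, hc.1] at this

lemma eq_of_isDyck_of_append_false_prefix {a c : List Bool} (ha : isDyck a) (hc : isDyck c)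
    (h : a ++ [false] <+: c ++ [false]) : a = c := by
  have hlen := h.length_le
  simp only [List.length_append, List.length_singleton] at hlen
  rcases hlen.lt_or_eq with hlt | heq
  · obtain ⟨r, rfl⟩ := List.prefix_of_prefix_length_le h (List.prefix_append c [false])
      (by simp; omega)
    simp only [List.append_assoc, List.singleton_append] at hc
    exact absurd hc (not_isDyck_append_false_cons ha r)
  · exact List.append_cancel_right (h.eq_of_length (by simp; omega))

lemma eq_and_prefix_of_isDyck_of_prefix {a c d w : List Bool} (ha : isDyck a) (hc : isDyck c)
    (h : c ++ false :: d <+: a ++ false :: w) : c = a ∧ d <+: w := by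
  have hc' : c ++ [false] <+: a ++ false :: w :=
    (List.prefix_append (c ++ [false]) d).trans (by simp [h])
  have ha' : a ++ [false] <+: a ++ false :: w := by simp
  have hca : c = a := by
    rcases le_total c.length a.length with hle | hle
    · exact eq_of_isDyck_of_append_false_prefix hc ha
        (List.prefix_of_prefix_length_le hc' ha' (by simp [hle]))
    · exact (eq_of_isDyck_of_append_false_prefix ha hc
        (List.prefix_of_prefix_length_le ha' hc' (by simp [hle]))).symm
  subst hca
  exact ⟨rfl, (List.cons_prefix_cons.1 ((List.prefix_append_right_inj c).1 h)).2⟩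

variable {π : List Bool → List ℕ}

lemma pi_perm_range' (hπ : IsPiFun π) : ∀ u, isDyck u → π u ~ List.range' 1 u.length := by
  refine isDyck_induction (by simp [hπ.1]) fun c d hc hd ihc ihd => ?_
  have hmc := ihc (mirror c) (isDyck_mirror hc) (length_mirror c).le
  rw [length_mirror] at hmc
  have hrev :
      (List.range' 1 c.length).map (c.length + 2 - ·) = (List.range' 2 c.length).reverse := by
    rw [List.reverse_range', List.range'_eq_map_range, List.map_map]
    exact List.map_congr_left fun x _ => by simp only [Function.comp_apply]; omega
  have hinner : (π (mirror c)).map (c.length + 2 - ·) ~ List.range' 2 c.length :=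
    (hmc.map _).trans (hrev ▸ List.reverse_perm _)
  have houter : (π d).map (c.length + 2 + ·) ~ List.range' (c.length + 3) d.length := by
    simpa only [List.map_add_range'] using ihd.map (c.length + 2 + ·)
  rw [hπ.2 c d hc hd]
  calc _ ~ (c.length + 2) :: List.range' 2 c.length ++ 1 :: List.range' (c.length + 3) d.length :=
        (hinner.cons _).append (houter.cons _)
    _ ~ 1 :: (List.range' 2 c.length ++ (c.length + 2) :: List.range' (c.length + 3) d.length) :=
        List.perm_middle.trans (List.perm_middle.symm.cons 1)
    _ = List.range' 1 (true :: c ++ false :: d).length := by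
        rw [show (true :: c ++ false :: d).length = c.length + (d.length + 1) + 1 by simp,
          List.range'_succ, ← List.range'_append, List.range'_succ]
        simp only [Nat.one_mul, List.cons.injEq, true_and]
        rw [show 1 + 1 + c.length = c.length + 2 by omega]

lemma length_pi (hπ : IsPiFun π) {u : List Bool} (hu : isDyck u) : (π u).length = u.length := by
  simpa using (pi_perm_range' hπ u hu).length_eq

lemma mem_pi_iff (hπ : IsPiFun π) {u : List Bool} (hu : isDyck u) {a : ℕ} :
    a ∈ π u ↔ 1 ≤ a ∧ a ≤ u.length := by
  rw [(pi_perm_range' hπ u hu).mem_iff, List.mem_range'_1]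
  omega

lemma foldl_pi (hπ : IsPiFun π) {u : List Bool} (hu : isDyck u) (v : List Bool) :
    (π u).foldl flipBit (u ++ v) = compl u ++ v := by
  rw [(pi_perm_range' hπ u hu).foldl_eq' (fun _ _ _ _ z => flipBit_flipBit_comm z _ _),
    foldl_flipBit_range']

lemma pi_append (hπ : IsPiFun π) {u v : List Bool} (hu : isDyck u) (hv : isDyck v) :
    π (u ++ v) = π u ++ (π v).map (u.length + ·) := by
  refine isDyck_induction (p := fun u => π (u ++ v) = π u ++ (π v).map (u.length + ·))
    (by simp [hπ.1]) (fun c d hc hd _ ih => ?_) u hu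
  rw [show true :: c ++ false :: d ++ v = true :: c ++ false :: (d ++ v) by simp,
    hπ.2 c (d ++ v) hc (isDyck_append hd hv), hπ.2 c d hc hd, ih]
  simp only [List.length_cons, List.length_append, List.map_append, List.map_map,
    List.cons_append, List.append_assoc]
  congr 4
  exact List.map_congr_left fun a _ => by simp only [Function.comp_apply]; omega

lemma length_pathOf (hπ : IsPiFun π) {x : List Bool} (hx : isDyck x) :
    (pathOf π x).length = x.length + 1 := by
  simp [pathOf, length_pi hπ hx]

lemma pathOf_getD (hπ : IsPiFun π) {x : List Bool} (hx : isDyck x) {i : ℕ} (hi : i ≤ x.length) :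
    (pathOf π x).getD i [] = ((π x).take i).foldl flipBit x := by
  rw [List.getD_eq_getElem _ _ (by rw [length_pathOf hπ hx]; omega)]
  exact List.getElem_scanl _

lemma pathOf_append_getD (hπ : IsPiFun π) {u t : List Bool} (hu : isDyck u) (ht : isDyck t)
    {j : ℕ} (hj : j ≤ t.length) :
    (pathOf π (u ++ t)).getD (u.length + j) [] = compl u ++ (pathOf π t).getD j [] := by
  rw [pathOf_getD hπ (isDyck_append hu ht) (by simp [hj]), pathOf_getD hπ ht hj,
    pi_append hπ hu ht, List.take_append, List.take_of_length_le (by rw [length_pi hπ hu]; omega),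
    length_pi hπ hu, Nat.add_sub_cancel_left, List.foldl_append, foldl_pi hπ hu, ← List.map_take,
    ← length_compl u, foldl_flipBit_append_map_length_add]
  exact fun a ha => ((mem_pi_iff hπ ht).1 (List.mem_of_mem_take ha)).1

lemma edgeOf_append (hπ : IsPiFun π) {u x : List Bool} (hu : isDyck u) (hx : isDyck x) {m : ℕ}
    (hm : m ∈ π x) :
    edgeOf π (u ++ x) (u.length + m) = Sym2.map (compl u ++ ·) (edgeOf π x m) := by
  have hmu : u.length + m ∉ π u := fun h => by
    have := (mem_pi_iff hπ hu).1 h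
    have := (mem_pi_iff hπ hx).1 hm
    omega
  have hidx : (π (u ++ x)).idxOf (u.length + m) = u.length + (π x).idxOf m := by
    rw [pi_append hπ hu hx, List.idxOf_append_of_notMem hmu, length_pi hπ hu,
      idxOf_map_of_injective (add_right_injective u.length)]
  have hlt := List.idxOf_lt_length_iff.2 hm
  rw [length_pi hπ hx] at hlt
  rw [edgeOf, edgeOf, hidx, Nat.add_assoc, pathOf_append_getD hπ hu hx hlt.le,
    pathOf_append_getD hπ hu hx hlt, Sym2.map_mk]

lemma take_one_pathOf_getD_of_le (hπ : IsPiFun π) {a v : List Bool} (ha : isDyck a)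
    (hv : isDyck v) {i : ℕ} (hi : i ≤ a.length + 1) :
    ((pathOf π (true :: a ++ false :: v)).getD i []).take 1 = [true] := by
  have hx : isDyck (true :: a ++ false :: v) := by
    simpa using isDyck_append (isDyck_nest ha) hv
  have hfirst : (π (true :: a ++ false :: v)).take (a.length + 1) =
      (a.length + 2) :: (π (mirror a)).map (a.length + 2 - ·) := by
    rw [hπ.2 a v ha hv, List.cons_append, List.take_succ_cons,
      List.take_left' (by simp [length_pi hπ (isDyck_mirror ha), length_mirror])]
  rw [pathOf_getD hπ hx (by simp; omega), take_foldl_flipBit]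
  · rfl
  intro b hb
  replace hb := hfirst ▸ List.take_subset_take_left _ hi hb
  rcases List.mem_cons.1 hb with rfl | hb
  · omega
  obtain ⟨c, hc, rfl⟩ := List.mem_map.1 hb
  have := (mem_pi_iff hπ (isDyck_mirror ha)).1 hc
  rw [length_mirror] at this
  omega

lemma prefix_of_compl_prefix_pathOf_getD (hπ : IsPiFun π) {u : List Bool} (hu : isDyck u) :
    ∀ {x : List Bool} {i : ℕ}, isDyck x → i ≤ x.length →
      compl u <+: (pathOf π x).getD i [] → u <+: x ∧ u.length ≤ i := by
  refine isDyck_induction (p := fun u => ∀ {x : List Bool} {i : ℕ}, isDyck x → i ≤ x.length →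
      compl u <+: (pathOf π x).getD i [] → u <+: x ∧ u.length ≤ i)
    (fun _ _ _ => ⟨List.nil_prefix, Nat.zero_le _⟩) (fun c d hc hd _ ih => ?_) u hu
  intro x i hx hi hpre
  have hhead : ((pathOf π x).getD i []).take 1 = [false] := by
    obtain ⟨t, ht⟩ := hpre
    rw [← ht, compl_cons_append_false_cons]
    rfl
  rcases eq_or_ne x [] with rfl | hne
  · rw [pathOf_getD hπ hx hi, hπ.1] at hhead
    simp at hhead
  obtain ⟨a, v, ha, hv, rfl⟩ := exists_eq_cons_append_of_isDyck hx hne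
  -- The first `|a| + 2` vertices of `P(1 a 0 v)` still begin with `1`, whereas `ū` begins with `0`.
  have hai : a.length + 2 ≤ i := by
    by_contra! hlt
    rw [take_one_pathOf_getD_of_le hπ ha hv (by omega)] at hhead
    simp at hhead
  obtain ⟨j, rfl⟩ := Nat.exists_eq_add_of_le hai
  have hj : j ≤ v.length := by simp at hi; omega
  have hvtx := pathOf_append_getD hπ (isDyck_nest ha) hv hj
  rw [← List.append_cons, show (true :: a ++ [false]).length = a.length + 2 by simp] at hvtx
  rw [hvtx, ← compl_compl ((pathOf π v).getD j []), ← compl_append, compl_prefix_compl_iff] at hpre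
  obtain ⟨rfl, hdw⟩ := eq_and_prefix_of_isDyck_of_prefix ha hc (by simpa using hpre)
  obtain ⟨hdv, hdj⟩ := ih hv hj (by rwa [← compl_compl ((pathOf π v).getD j []),
    compl_prefix_compl_iff])
  exact ⟨by simpa using hdv, by simp; omega⟩

lemma inB_compl_append {u : List Bool} (hu : isDyck u) {k : ℕ} {y : List Bool} (hy : inB k y) :
    inB (k + u.length / 2) (compl u ++ y) := by
  have := two_mul_length_div_two_of_isDyck hu
  have := count_true_of_isDyck hu
  have hf : u.count false = u.length / 2 := hu.1 ▸ this
  refine ⟨by simp [length_compl, hy.1]; omega, ?_⟩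
  rw [List.count_append, count_compl, Bool.not_true, hf]
  have := hy.2
  omega

lemma gkAdj_compl_append {u : List Bool} (hu : isDyck u) {k : ℕ} {y z : List Bool}
    (h : GkAdj k y z) : GkAdj (k + u.length / 2) (compl u ++ y) (compl u ++ z) := by
  refine ⟨inB_compl_append hu h.1, inB_compl_append hu h.2.1, ?_⟩
  rw [show 2 * (k + u.length / 2) = u.length + 2 * k by
      have := two_mul_length_div_two_of_isDyck hu; omega,
    List.range_add, List.countP_append, List.countP_map, List.countP_eq_zero.2, Nat.zero_add]
  · convert h.2.2 using 2
    ext i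
    simp only [Function.comp_apply]
    rw [← length_compl u, List.getD_append_right _ _ _ _ (by omega),
      List.getD_append_right _ _ _ _ (by omega), Nat.add_sub_cancel_left]
  · intro i hi
    rw [List.mem_range, ← length_compl u] at hi
    rw [List.getD_append _ _ _ _ hi, List.getD_append _ _ _ _ hi]
    simp

lemma cycEdges_map (f : List Bool → List Bool) (l : List (List Bool)) :
    cycEdges (l.map f) = (cycEdges l).map (Sym2.map f) := by
  rw [cycEdges, cycEdges, ← List.map_rotate, List.zipWith_map, List.map_zipWith]
  simp [Sym2.map_mk]

lemma mem_edgesOf_iff {e : Sym2 (List Bool)} {l : List (List Bool)} :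
    e ∈ edgesOf l ↔ ∃ i, i + 1 < l.length ∧ e = s(l.getD i [], l.getD (i + 1) []) := by
  rw [edgesOf, List.mem_iff_getElem]
  simp only [List.length_zipWith, List.length_tail, List.getElem_zipWith, List.getElem_tail]
  constructor
  · rintro ⟨i, hi, rfl⟩
    exact ⟨i, by omega, by rw [List.getD_eq_getElem, List.getD_eq_getElem]⟩
  · rintro ⟨i, hi, rfl⟩
    exact ⟨i, by omega, by rw [List.getD_eq_getElem, List.getD_eq_getElem]⟩

variable {k : ℕ} {τ : Finset (List Bool × ℕ)} {ys : List (List Bool)} {u : List Bool}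

lemma prepend_injective (u : List Bool) :
    Function.Injective fun p : List Bool × ℕ => (u ++ p.1, u.length + p.2) :=
  fun p q h => by simpa [Prod.ext_iff] using h

lemma isDyck_and_bounds_of_mem_prepend (hu : isDyck u)
    (hτ : ∀ p ∈ τ, isDyck p.1 ∧ p.1.length = 2 * k ∧ 1 ≤ p.2 ∧ p.2 ≤ 2 * k) :
    ∀ p ∈ τ.image (fun p => (u ++ p.1, u.length + p.2)), isDyck p.1 ∧
      p.1.length = 2 * (k + u.length / 2) ∧ 1 ≤ p.2 ∧ p.2 ≤ 2 * (k + u.length / 2) := by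
  simp only [Finset.mem_image]
  rintro _ ⟨⟨x, m⟩, hp, rfl⟩
  obtain ⟨hx, hxlen, hm⟩ := hτ _ hp
  have := two_mul_length_div_two_of_isDyck hu
  exact ⟨isDyck_append hu hx, by rw [List.length_append]; omega, by omega, by omega⟩

lemma edgeOf_mem_cycEdges_prepend (hπ : IsPiFun π) (hu : isDyck u)
    (hτ : ∀ p ∈ τ, isDyck p.1 ∧ p.1.length = 2 * k ∧ 1 ≤ p.2 ∧ p.2 ≤ 2 * k)
    (hedges : ∀ p ∈ τ, edgeOf π p.1 p.2 ∈ cycEdges ys) :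
    ∀ p ∈ τ.image (fun p => (u ++ p.1, u.length + p.2)),
      edgeOf π p.1 p.2 ∈ cycEdges (ys.map (compl u ++ ·)) := by
  simp only [Finset.mem_image]
  rintro _ ⟨⟨x, m⟩, hp, rfl⟩
  obtain ⟨hx, hxlen, hm⟩ := hτ _ hp
  rw [edgeOf_append hπ hu hx ((mem_pi_iff hπ hx).2 (by omega)), cycEdges_map]
  exact List.mem_map_of_mem (hedges _ hp)

lemma exists_edgeOf_eq_of_mem_cycEdges_prepend (hπ : IsPiFun π) (hu : isDyck u)
    (hτ : ∀ p ∈ τ, isDyck p.1 ∧ p.1.length = 2 * k ∧ 1 ≤ p.2 ∧ p.2 ≤ 2 * k)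
    (hcomplete : ∀ x : List Bool, isDyck x → x.length = 2 * k → ∀ e ∈ cycEdges ys,
      e ∈ edgesOf (pathOf π x) → ∃ m, (x, m) ∈ τ ∧ e = edgeOf π x m) :
    ∀ x : List Bool, isDyck x → x.length = 2 * (k + u.length / 2) →
      ∀ e ∈ cycEdges (ys.map (compl u ++ ·)), e ∈ edgesOf (pathOf π x) →
        ∃ m, (x, m) ∈ τ.image (fun p => (u ++ p.1, u.length + p.2)) ∧ e = edgeOf π x m := by
  intro x hx hxlen e he hex
  rw [cycEdges_map] at he
  obtain ⟨e₀, he₀, rfl⟩ := List.mem_map.1 he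
  obtain ⟨i, hi, hei⟩ := mem_edgesOf_iff.1 hex
  rw [length_pathOf hπ hx] at hi
  have hpre : compl u <+: (pathOf π x).getD i [] := by
    obtain ⟨y, -, hy⟩ := Sym2.mem_map.1 (hei ▸ Sym2.mem_mk_left _ _)
    exact hy ▸ List.prefix_append _ _
  obtain ⟨⟨t, rfl⟩, hui⟩ := prefix_of_compl_prefix_pathOf_getD hπ hu hx (by omega) hpre
  have ht := isDyck_of_append hu hx
  obtain ⟨j, rfl⟩ := Nat.exists_eq_add_of_le hui
  have htlen : t.length = 2 * k := by
    have := two_mul_length_div_two_of_isDyck hu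
    simp at hxlen
    omega
  have hj : j + 1 ≤ t.length := by simp at hi; omega
  have hedge : s((pathOf π t).getD j [], (pathOf π t).getD (j + 1) []) = e₀ := by
    refine Sym2.map.injective (List.append_right_injective (compl u)) ?_
    rw [Sym2.map_mk, ← pathOf_append_getD hπ hu ht (by omega), ← pathOf_append_getD hπ hu ht hj,
      ← Nat.add_assoc, ← hei]
  obtain ⟨m, hm, hme⟩ := hcomplete t ht htlen e₀ he₀
    (hedge ▸ mem_edgesOf_iff.2 ⟨j, by rw [length_pathOf hπ ht]; omega, rfl⟩)
  obtain ⟨-, -, hmt⟩ := hτ _ hm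
  refine ⟨u.length + m, Finset.mem_image.2 ⟨(t, m), hm, rfl⟩, ?_⟩
  rw [hme, edgeOf_append hπ hu ht ((mem_pi_iff hπ ht).2 (by omega))]

lemma isFlippingCycleFor_prepend (hπ : IsPiFun π) (hu : isDyck u)
    (hτ : ∀ p ∈ τ, isDyck p.1 ∧ p.1.length = 2 * k ∧ 1 ≤ p.2 ∧ p.2 ≤ 2 * k)
    (hys : IsFlippingCycleFor π k τ ys) :
    IsFlippingCycleFor π (k + u.length / 2) (τ.image fun p => (u ++ p.1, u.length + p.2))
      (ys.map (compl u ++ ·)) := by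
  obtain ⟨hnodup, hlen, hchain, hclose, hedges, hcomplete⟩ := hys
  refine ⟨hnodup.map (List.append_right_injective _), ?_,
    (List.isChain_map _).2 (hchain.imp fun _ _ => gkAdj_compl_append hu), fun h => ?_,
    edgeOf_mem_cycEdges_prepend hπ hu hτ hedges,
    exists_edgeOf_eq_of_mem_cycEdges_prepend hπ hu hτ hcomplete⟩
  · rw [List.length_map, Finset.card_image_of_injective _ (prepend_injective u), hlen]
  · rw [List.getLast_map, List.head_map]
    exact gkAdj_compl_append hu (hclose _)

end MiddleLevels

theorem stmt_16 (π : List Bool → List ℕ) (hπ : IsPiFun π) (k : ℕ)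
    (τ : Finset (List Bool × ℕ)) (ys : List (List Bool))
    (hτ : IsFlippableTuple π k τ) (hys : IsFlippingCycleFor π k τ ys)
    (u : List Bool) (hu : isDyck u) :
    IsFlippableTuple π (k + u.length / 2) (τ.image (fun p => (u ++ p.1, u.length + p.2)))
    ∧ IsFlippingCycleFor π (k + u.length / 2)
        (τ.image (fun p => (u ++ p.1, u.length + p.2)))
        (ys.map (fun y => compl u ++ y)) := by
  obtain ⟨hcard, hbounds, hfst, -⟩ := hτ
  have hcycle := MiddleLevels.isFlippingCycleFor_prepend hπ hu hbounds hys
  refine ⟨⟨?_, MiddleLevels.isDyck_and_bounds_of_mem_prepend hu hbounds, ?_, _, hcycle⟩, hcycle⟩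
  · rwa [Finset.card_image_of_injective _ (MiddleLevels.prepend_injective u)]
  · simp only [Finset.mem_image]
    rintro _ ⟨p, hp, rfl⟩ _ ⟨q, hq, rfl⟩ h
    rw [hfst p hp q hq (List.append_cancel_left h)]
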